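/- Let δ_3(n) = F_3(n) − α_3·n, and set d₃⁺ = 0.854187179928304211983581540152668 and d₃⁻ = −0.708415898743967960305146324178773. Then d₃⁺ − 3·10⁻³³ ≤ sup_n δ_3(n) ≤ d₃⁺ and d₃⁻ ≤ inf_n δ_3(n) ≤ d₃⁻ + 3·10⁻³³. In particular |F_3(n) − α_3·n| < 1 for all n ≥ 0, so the discrepancy Δ_3 = sup_n |δ_3(n)| is finite and equals sup_n δ_3(n). -/

import Mathlib

/-- Fuel-limited version of Hofstadter's recursion:
`Fa k fuel n` equals `F_k n` whenever `fuel ≥ n`. -/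
def Fa (k : ℕ) : ℕ → ℕ → ℕ
  | 0, _ => 0
  | _ + 1, 0 => 0
  | fuel + 1, n + 1 => (n + 1) - (Fa k fuel)^[k] n

/-- Hofstadter's function `F_k` : `F k 0 = 0` and `F k n = n - (F k)^[k] (n-1)`
for `n ≥ 1` (since `F_k m ≤ m`, the fuel `n` is always sufficient). -/
def F (k : ℕ) (n : ℕ) : ℕ := Fa k n n

/-- The function `L_k n = n + (F k)^[k-1] n`. -/
def L (k : ℕ) (n : ℕ) : ℕ := n + (F k)^[k - 1] n

/-!
Let `A 0, A 1, A 2 = 1, 2, 3` and `A (i + 3) = A (i + 2) + A i`. Strong induction on the recursion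
`F 3 (n + 1) = n + 1 - F 3 (F 3 (F 3 n))` gives `F 3 (A (m + 3) + r) = A (m + 2) + F 3 r` for
`r ≤ A (m + 1)`. Every `n` is a sum `∑ A i` over indices pairwise at least `3` apart, and `F 3`
lowers each index by one, so `F 3 n - α n = ∑ err α i` with `err α i = A (i - 1) - α A i`.
The sequence `err α` obeys the recurrence of `A` but has no component along its dominant root
`α⁻¹`, so it decays like `√α ^ i`. The extreme values of such sums are computed by a dynamic
programme over the indices below `452`, in integer arithmetic with `α` rounded to 120 digits, and
a geometric bound for the larger indices; explicit index lists show that both bounds are attained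
up to `3 · 10⁻³³`.
-/

namespace Hofstadter

theorem iterate_congr_of_le {g h : ℕ → ℕ} {n : ℕ} (hg : ∀ m, g m ≤ m)
    (hgh : ∀ m ≤ n, g m = h m) (j : ℕ) : g^[j] n = h^[j] n := by
  induction j with
  | zero => rfl
  | succ j ih =>
    rw [Function.iterate_succ_apply', Function.iterate_succ_apply', ← ih]
    exact hgh _ (Function.iterate_le_id_of_le_id hg j n)

theorem iterate_succ_eq_or {g : ℕ → ℕ} {n : ℕ} (hg : ∀ m, g m ≤ m)
    (hstep : ∀ m ≤ n, g (m + 1) = g m ∨ g (m + 1) = g m + 1) (j : ℕ) :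
    g^[j] (n + 1) = g^[j] n ∨ g^[j] (n + 1) = g^[j] n + 1 := by
  induction j with
  | zero => exact Or.inr rfl
  | succ j ih =>
    simp only [Function.iterate_succ_apply']
    rcases ih with h | h
    · exact Or.inl (by rw [h])
    · rw [h]
      exact hstep _ (Function.iterate_le_id_of_le_id hg j n)

theorem Fa_le (k fuel n : ℕ) : Fa k fuel n ≤ n := by
  cases fuel <;> cases n <;> simp [Fa]

theorem Fa_congr_fuel (k : ℕ) {f f' n : ℕ} (hf : n ≤ f) (hf' : n ≤ f') :
    Fa k f n = Fa k f' n := by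
  induction f generalizing f' n with
  | zero =>
    obtain rfl : n = 0 := by omega
    cases f' <;> rfl
  | succ f ih =>
    obtain _ | n := n
    · cases f' <;> rfl
    obtain ⟨f', rfl⟩ : ∃ f'', f' = f'' + 1 := ⟨f' - 1, by omega⟩
    simp only [Fa]
    congr 1
    exact iterate_congr_of_le (Fa_le k f) (fun m hm => ih (by omega) (by omega)) k

theorem F_le (k n : ℕ) : F k n ≤ n := Fa_le k n n

theorem F_succ (k n : ℕ) : F k (n + 1) = n + 1 - (F k)^[k] n := by
  simp only [F, Fa]
  congr 1
  exact iterate_congr_of_le (Fa_le k n) (fun m hm => Fa_congr_fuel k hm le_rfl) k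

theorem F_succ_eq_or (k n : ℕ) : F k (n + 1) = F k n ∨ F k (n + 1) = F k n + 1 := by
  induction n using Nat.strong_induction_on with
  | _ n ih =>
    have hit := fun j n => Function.iterate_le_id_of_le_id (F_le k) j n
    rcases n with _ | n
    · have := hit k 0
      have := F_le k 0
      rw [F_succ]
      omega
    · have h := iterate_succ_eq_or (n := n) (F_le k) (fun m hm => ih m (by omega)) k
      have := hit k n
      rw [F_succ, F_succ]
      omega

theorem F_monotone (k : ℕ) : Monotone (F k) :=
  monotone_nat_of_le_succ fun n => by rcases F_succ_eq_or k n with h | h <;> omega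

theorem F_three_succ_add (n : ℕ) : F 3 (n + 1) + F 3 (F 3 (F 3 n)) = n + 1 := by
  have h := F_succ 3 n
  have h3 : F 3 (F 3 (F 3 n)) ≤ n := (F_le 3 _).trans ((F_le 3 _).trans (F_le 3 n))
  simp only [Function.iterate_succ_apply', Function.iterate_zero_apply] at h
  omega

/-- The paper's `A_n` for `k = 3`. -/
def A : ℕ → ℕ
  | 0 => 1
  | 1 => 2
  | 2 => 3
  | n + 3 => A (n + 2) + A n

theorem A_add_three (n : ℕ) : A (n + 3) = A (n + 2) + A n := rfl

/-- Thanks to truncated subtraction this holds for every `n`, not only for `n ≥ 2`. -/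
theorem A_succ (n : ℕ) : A (n + 1) = A n + A (n - 2) := by
  match n with
  | 0 | 1 => rfl
  | n + 2 => rfl

theorem A_pos (n : ℕ) : 0 < A n := by
  induction n using Nat.strong_induction_on with
  | _ n ih =>
    match n with
    | 0 | 1 | 2 => decide
    | n + 3 => exact Nat.add_pos_left (ih _ (by omega)) _

theorem A_strictMono : StrictMono A :=
  strictMono_nat_of_lt_succ fun n => by rw [A_succ]; have := A_pos (n - 2); omega

theorem self_lt_A (n : ℕ) : n < A n := by
  induction n with
  | zero => exact A_pos 0
  | succ n ih => exact (Nat.succ_le_of_lt ih).trans_lt (A_strictMono (Nat.lt_succ_self n))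

section SplitBelow

variable {n : ℕ}
  (ih : ∀ m r, r ≤ A (m + 1) → A (m + 3) + r < n → F 3 (A (m + 3) + r) = A (m + 2) + F 3 r)
include ih

theorem F_A_of_split_below {j : ℕ} (hj : A (j + 1) < n) : F 3 (A (j + 1)) = A j := by
  match j with
  | 0 | 1 => decide
  | j + 2 => simpa [show F 3 0 = 0 from rfl] using ih j 0 (Nat.zero_le _) (by simpa using hj)

theorem F_A_add_succ_of_split_below {m s : ℕ} (hs : s < A (m + 1))
    (hn : A (m + 3) + (s + 1) ≤ n) : F 3 (A (m + 3) + (s + 1)) = A (m + 2) + F 3 (s + 1) := by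
  match m with
  | 0 =>
    have : s < 2 := hs
    interval_cases s <;> decide
  | 1 =>
    have : s < 3 := hs
    interval_cases s <;> decide
  | p + 2 =>
    change s < A (p + 3) at hs
    change A (p + 5) + (s + 1) ≤ n at hn
    show F 3 (A (p + 5) + (s + 1)) = A (p + 4) + F 3 (s + 1)
    have hA : A (p + 2) < A (p + 3) ∧ A (p + 3) < A (p + 4) ∧ A (p + 4) < A (p + 5) :=
      ⟨A_strictMono (by omega), A_strictMono (by omega), A_strictMono (by omega)⟩
    have hsF : F 3 s ≤ s := F_le 3 s
    have h1 : F 3 (A (p + 5) + s) = A (p + 4) + F 3 s :=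
      ih (p + 2) s hs.le (by omega : A (p + 5) + s < n)
    have hs1 : F 3 s ≤ A (p + 2) :=
      (F_monotone 3 hs.le).trans_eq (F_A_of_split_below ih (by omega : A (p + 3) < n))
    have h2 : F 3 (A (p + 4) + F 3 s) = A (p + 3) + F 3 (F 3 s) :=
      ih (p + 1) _ hs1 (by omega : A (p + 4) + F 3 s < n)
    have hs2 : F 3 (F 3 s) ≤ A (p + 1) :=
      (F_monotone 3 hs1).trans_eq (F_A_of_split_below ih (by omega : A (p + 2) < n))
    have h3 : F 3 (A (p + 3) + F 3 (F 3 s)) = A (p + 2) + F 3 (F 3 (F 3 s)) :=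
      ih p _ hs2 (by have := F_le 3 (F 3 s); omega : A (p + 3) + F 3 (F 3 s) < n)
    have hrec := F_three_succ_add (A (p + 5) + s)
    have hrec' := F_three_succ_add s
    have hA5 : A (p + 5) = A (p + 4) + A (p + 2) := rfl
    rw [h1, h2, h3, Nat.add_assoc] at hrec
    omega

end SplitBelow

theorem F_A_add (m r : ℕ) (hr : r ≤ A (m + 1)) : F 3 (A (m + 3) + r) = A (m + 2) + F 3 r := by
  suffices ∀ n m r, r ≤ A (m + 1) → A (m + 3) + r = n → F 3 n = A (m + 2) + F 3 r from
    this _ m r hr rfl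
  intro n
  induction n using Nat.strong_induction_on with
  | _ n ih =>
  have ih' : ∀ m r, r ≤ A (m + 1) → A (m + 3) + r < n →
      F 3 (A (m + 3) + r) = A (m + 2) + F 3 r := fun m r hr h => ih _ h m r hr rfl
  rintro m (_ | s) hr rfl
  · cases m with
    | zero => decide
    | succ m =>
      show F 3 (A (m + 4) + 0) = A (m + 3) + F 3 0
      have hpos := A_pos (m + 1)
      have hA4 : A (m + 4) = A (m + 3) + A (m + 1) := rfl
      have hlt : A (m + 1) < A (m + 4) := A_strictMono (by omega)
      have e : A (m + 4) + 0 = A (m + 3) + (A (m + 1) - 1 + 1) := by omega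
      rw [e, F_A_add_succ_of_split_below ih' (by omega) e.symm.le, Nat.sub_add_cancel hpos,
        F_A_of_split_below ih' (by omega)]
      rfl
  · exact F_A_add_succ_of_split_below ih' (by omega) le_rfl

theorem F_A_add_of_lt {i r : ℕ} (hr : r < A (i - 2)) : F 3 (A i + r) = A (i - 1) + F 3 r := by
  match i with
  | 0 | 1 | 2 =>
    obtain rfl : r = 0 := by simpa [A] using hr
    decide
  | m + 3 => exact F_A_add m r hr.le

/-- Index lists of the canonical decompositions `n = ∑ A i`: decreasing, with gaps at least 3. -/
abbrev Sparse (l : List ℕ) : Prop := l.Pairwise fun i j => j + 3 ≤ i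

theorem sum_le_of_step {M : Type*} [AddCommMonoid M] [PartialOrder M] [IsOrderedAddMonoid M]
    {f V : ℕ → M} (hV : Monotone V) (h0 : 0 ≤ V 0) (hstep : ∀ i, f i + V (i - 2) ≤ V (i + 1))
    {l : List ℕ} (hl : Sparse l) {j : ℕ} (hj : ∀ i ∈ l, i < j) : (l.map f).sum ≤ V j := by
  induction l generalizing j with
  | nil => exact h0.trans (hV (Nat.zero_le j))
  | cons i l ih =>
    obtain ⟨hgap, hl⟩ := List.pairwise_cons.1 hl
    have hi : i < j := hj i List.mem_cons_self
    calc ((i :: l).map f).sum = f i + (l.map f).sum := by simp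
      _ ≤ f i + V (i - 2) := by gcongr; exact ih hl fun x hx => by have := hgap x hx; omega
      _ ≤ V (i + 1) := hstep i
      _ ≤ V j := hV hi

theorem sum_A_lt {l : List ℕ} (hl : Sparse l) {j : ℕ} (hj : ∀ i ∈ l, i < j) :
    (l.map A).sum < A j := by
  have h := sum_le_of_step (f := A) (V := fun j => A j - 1)
    (fun a b hab => Nat.sub_le_sub_right (A_strictMono.monotone hab) 1) le_rfl
    (fun i => by have := A_succ i; have := A_pos (i - 2); omega) hl hj
  have := A_pos j
  omega

theorem exists_sparse_sum_A {m n : ℕ} (hn : n < A m) :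
    ∃ l, Sparse l ∧ (∀ i ∈ l, i < m) ∧ (l.map A).sum = n := by
  induction m using Nat.strong_induction_on generalizing n with
  | _ m ih =>
  rcases m with _ | m
  · exact ⟨[], List.Pairwise.nil, by simp, by simpa [A, eq_comm] using hn⟩
  by_cases h : n < A m
  · obtain ⟨l, hl, hlm, hsum⟩ := ih m (by omega) h
    exact ⟨l, hl, fun i hi => (hlm i hi).trans (by omega), hsum⟩
  · obtain ⟨l, hl, hlm, hsum⟩ := ih (m - 2) (by omega) (n := n - A m)
      (by have := A_succ m; omega)
    refine ⟨m :: l, List.pairwise_cons.2 ⟨fun i hi => ?_, hl⟩, fun i hi => ?_, ?_⟩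
    · have := hlm i hi; omega
    · rcases List.mem_cons.1 hi with rfl | hi
      · omega
      · have := hlm i hi; omega
    · simp only [List.map_cons, List.sum_cons, hsum]
      omega

theorem F_sum_A {l : List ℕ} (hl : Sparse l) :
    F 3 (l.map A).sum = (l.map fun i => A (i - 1)).sum := by
  induction l with
  | nil => rfl
  | cons i l ih =>
    obtain ⟨hgap, hl⟩ := List.pairwise_cons.1 hl
    have hlt : (l.map A).sum < A (i - 2) :=
      sum_A_lt hl fun x hx => by have := hgap x hx; omega
    simp only [List.map_cons, List.sum_cons, F_A_add_of_lt hlt, ih hl]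

/-- `dpState ev j = (U j, U (j - 1), U (j - 2))` for the table `U 0 = 0`,
`U (j + 1) = max (U j) (ev j + U (j - 2))`, so that `U j` is the largest sum of `ev` over a sparse
list with entries `< j`. Carrying three values makes the evaluation by `decide` linear in `j`. -/
def dpState (ev : ℕ → ℤ) : ℕ → ℤ × ℤ × ℤ
  | 0 => (0, 0, 0)
  | j + 1 => let s := dpState ev j; (max s.1 (ev j + s.2.2), s.1, s.2.1)

def dpTable (ev : ℕ → ℤ) (j : ℕ) : ℤ := (dpState ev j).1

theorem dpState_eq (ev : ℕ → ℤ) (j : ℕ) :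
    dpState ev j = (dpTable ev j, dpTable ev (j - 1), dpTable ev (j - 2)) := by
  induction j with
  | zero => rfl
  | succ j ih => exact Prod.ext rfl (Prod.ext rfl (congrArg (fun s => s.2.1) ih))

theorem dpTable_succ (ev : ℕ → ℤ) (j : ℕ) :
    dpTable ev (j + 1) = max (dpTable ev j) (ev j + dpTable ev (j - 2)) := by
  show max (dpState ev j).1 (ev j + (dpState ev j).2.2) = _
  rw [dpState_eq]

theorem dpTable_monotone (ev : ℕ → ℤ) : Monotone (dpTable ev) :=
  monotone_nat_of_le_succ fun j => (dpTable_succ ev j).symm ▸ le_max_left _ _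

section Majorant

variable {ev : ℕ → ℤ} {D β : ℝ} {N : ℕ}

/-- The table scaled by `D`, continued beyond `N` by partial sums of the geometric bound `β ^ i`
on the summands. -/
noncomputable def dpMajorant (ev : ℕ → ℤ) (D β : ℝ) (N j : ℕ) : ℝ :=
  dpTable ev (min j N) / D + (β ^ N - β ^ max j N) / (1 - β)

variable (hD : 0 < D) (hβ0 : 0 ≤ β) (hβ1 : β < 1)
include hD hβ0 hβ1

theorem dpMajorant_monotone : Monotone (dpMajorant ev D β N) := by
  intro a b hab
  have h1 : (dpTable ev (min a N) : ℝ) ≤ dpTable ev (min b N) :=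
    Int.cast_le.2 (dpTable_monotone ev (min_le_min_right N hab))
  have h2 : β ^ max b N ≤ β ^ max a N :=
    pow_le_pow_of_le_one hβ0 hβ1.le (max_le_max_right N hab)
  unfold dpMajorant
  gcongr

theorem dpMajorant_le (j : ℕ) :
    dpMajorant ev D β N j ≤ dpTable ev N / D + β ^ N / (1 - β) := by
  have h1 : (dpTable ev (min j N) : ℝ) ≤ dpTable ev N :=
    Int.cast_le.2 (dpTable_monotone ev (min_le_right j N))
  have h2 : 0 ≤ β ^ max j N := pow_nonneg hβ0 _
  unfold dpMajorant
  gcongr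
  linarith

variable {f : ℕ → ℝ} (hev : ∀ i < N, f i ≤ ev i / D) (htail : ∀ i, N ≤ i → f i ≤ β ^ i)
include hev htail

theorem dpMajorant_step (i : ℕ) :
    f i + dpMajorant ev D β N (i - 2) ≤ dpMajorant ev D β N (i + 1) := by
  rcases lt_or_ge i N with hi | hi
  · have hU : (ev i : ℝ) + dpTable ev (i - 2) ≤ dpTable ev (i + 1) := by
      rw [dpTable_succ]; exact_mod_cast le_max_right _ _
    simp only [dpMajorant, min_eq_left (by omega : i + 1 ≤ N), min_eq_left (by omega : i - 2 ≤ N),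
      max_eq_right (by omega : i + 1 ≤ N), max_eq_right (by omega : i - 2 ≤ N)]
    have := div_le_div_of_nonneg_right hU hD.le
    rw [add_div] at this
    linarith [hev i hi]
  · have hmono := dpMajorant_monotone (ev := ev) (N := N) hD hβ0 hβ1 (Nat.sub_le i 2)
    have hsucc : dpMajorant ev D β N (i + 1) = dpMajorant ev D β N i + β ^ i := by
      simp only [dpMajorant, min_eq_right hi, min_eq_right (by omega : N ≤ i + 1),
        max_eq_left hi, max_eq_left (by omega : N ≤ i + 1)]
      field_simp [(by linarith : (1 - β) ≠ 0)]
      ring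
    linarith [htail i hi]

theorem sum_le_dpTable {l : List ℕ} (hl : Sparse l) :
    (l.map f).sum ≤ dpTable ev N / D + β ^ N / (1 - β) := by
  refine (sum_le_of_step (dpMajorant_monotone hD hβ0 hβ1) ?_
    (dpMajorant_step hD hβ0 hβ1 hev htail) hl (j := l.sum + 1)
    fun i hi => Nat.lt_succ_of_le (List.le_sum_of_mem hi)).trans (dpMajorant_le hD hβ0 hβ1 _)
  simp [dpMajorant, dpTable, dpState]

end Majorant

/-- `F 3 n - α n` at `n = A i`, since `F 3 (A i) = A (i - 1)`. -/
noncomputable def err (α : ℝ) (i : ℕ) : ℝ := A (i - 1) - α * A i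

theorem err_zero (α : ℝ) : err α 0 = 1 - α := by simp [err, A]

theorem err_one (α : ℝ) : err α 1 = 1 - 2 * α := by norm_num [err, A, mul_comm]

theorem err_add_three (α : ℝ) (n : ℕ) : err α (n + 3) = err α (n + 2) + err α n := by
  have h : A (n + 2) = A (n + 1) + A (n - 1) := A_succ (n + 1)
  simp only [err, A_add_three, show n + 3 - 1 = n + 2 by omega, h]
  push_cast
  ring

theorem sub_mul_sum_A_eq_sum_err (α : ℝ) {l : List ℕ} (hl : Sparse l) :
    (F 3 (l.map A).sum : ℝ) - α * (l.map A).sum = (l.map (err α)).sum := by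
  rw [F_sum_A hl]
  induction l with
  | nil => simp
  | cons i l ih =>
    simp only [List.map_cons, List.sum_cons, Nat.cast_add, err] at ih ⊢
    rw [← ih (List.pairwise_cons.1 hl).2]
    ring

theorem sub_mul_le_div {α : ℝ} {a c : ℤ} {b s D : ℕ} (hD : 0 < D) (hα : (a : ℝ) / D < α)
    (h : b * D - a * s ≤ c) : (b : ℝ) - α * s ≤ c / D := by
  have hD' : (0 : ℝ) < D := by exact_mod_cast hD
  have h' : (b : ℝ) * D - a * s ≤ c := by exact_mod_cast h
  rw [div_lt_iff₀ hD'] at hα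
  rw [le_div_iff₀ hD']
  nlinarith [(Nat.cast_nonneg s : (0 : ℝ) ≤ s)]

theorem div_le_sub_mul {α : ℝ} {a c : ℤ} {b s D : ℕ} (hD : 0 < D) (hα : α < (a : ℝ) / D)
    (h : c ≤ b * D - a * s) : (c : ℝ) / D ≤ b - α * s := by
  have hD' : (0 : ℝ) < D := by exact_mod_cast hD
  have h' : (c : ℝ) ≤ b * D - a * s := by exact_mod_cast h
  rw [lt_div_iff₀ hD'] at hα
  rw [div_le_iff₀ hD']
  nlinarith [(Nat.cast_nonneg s : (0 : ℝ) ≤ s)]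

/-- `⌊α · 10 ^ 120⌋`. -/
def aLo : ℤ := 682327803828019327369483739711048256891188581897998577803728606639896678686998021081732043786205128295593318763903662494

def errUpper (i : ℕ) : ℤ := A (i - 1) * 10 ^ 120 - aLo * A i

def negErrUpper (i : ℕ) : ℤ := (aLo + 1) * A i - A (i - 1) * 10 ^ 120

/-- Sparse lists maximising (`witnessSup`) and minimising (`witnessInf`) `∑ err α i`, read off
the dynamic programme. -/
def witnessSup : List ℕ :=
  [450, 446, 443, 439, 436, 433, 429, 426, 423, 419, 416, 412, 409, 406, 402, 399, 395, 392,
    389, 385, 382, 379, 375, 372, 368, 365, 362, 358, 355, 351, 348, 345, 341, 338, 335, 331,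
    328, 324, 321, 318, 314, 311, 307, 304, 301, 297, 294, 291, 287, 284, 280, 277, 274, 270,
    267, 263, 260, 257, 253, 250, 247, 243, 240, 236, 233, 230, 226, 223, 219, 216, 213, 209,
    206, 203, 199, 196, 192, 189, 186, 182, 179, 175, 172, 169, 165, 162, 159, 155, 152, 148,
    145, 142, 138, 135, 131, 128, 125, 121, 118, 115, 111, 108, 104, 101, 98, 94, 91, 87, 84,
    81, 77, 74, 71, 67, 64, 60, 57, 54, 50, 47, 43, 40, 37, 33, 30, 27, 23, 20, 16, 13, 10, 6,
    3, 0]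

def witnessInf : List ℕ :=
  [451, 448, 445, 441, 438, 434, 431, 428, 424, 421, 417, 414, 411, 407, 404, 401, 397, 394,
    390, 387, 384, 380, 377, 373, 370, 367, 363, 360, 357, 353, 350, 346, 343, 340, 336, 333,
    329, 326, 323, 319, 316, 313, 309, 306, 302, 299, 296, 292, 289, 285, 282, 279, 275, 272,
    269, 265, 262, 258, 255, 252, 248, 245, 241, 238, 235, 231, 228, 225, 221, 218, 214, 211,
    208, 204, 201, 197, 194, 191, 187, 184, 181, 177, 174, 170, 167, 164, 160, 157, 153, 150,
    147, 143, 140, 137, 133, 130, 126, 123, 120, 116, 113, 109, 106, 103, 99, 96, 93, 89, 86,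
    82, 79, 76, 72, 69, 65, 62, 59, 55, 52, 49, 45, 42, 38, 35, 32, 28, 25, 21, 18, 15, 11, 8,
    5, 1]

set_option maxRecDepth 100000 in
theorem dpTable_errUpper :
    dpTable errUpper 452 + 10 ^ 85 ≤ 854187179928304211983581540152668 * 10 ^ 87 := by
  decide

set_option maxRecDepth 100000 in
theorem dpTable_negErrUpper :
    dpTable negErrUpper 452 + 10 ^ 85 ≤ 708415898743967960305146324178773 * 10 ^ 87 := by
  decide

set_option maxRecDepth 100000 in
theorem sparse_witnessSup : Sparse witnessSup := by decide

set_option maxRecDepth 100000 in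
theorem sparse_witnessInf : Sparse witnessInf := by decide

set_option maxRecDepth 100000 in
theorem witnessSup_bound : (854187179928304211983581540152668 - 3) * 10 ^ 87 ≤
    ((witnessSup.map fun i => A (i - 1)).sum : ℤ) * (10 ^ 120 : ℕ) -
      (aLo + 1) * (witnessSup.map A).sum := by
  decide

set_option maxRecDepth 100000 in
theorem witnessInf_bound :
    ((witnessInf.map fun i => A (i - 1)).sum : ℤ) * (10 ^ 120 : ℕ) - aLo * (witnessInf.map A).sum ≤
      (-708415898743967960305146324178773 + 3) * 10 ^ 87 := by
  decide

theorem geometric_tail_le : (83 / 100 : ℝ) ^ 452 / (1 - 83 / 100) ≤ 10 ^ 85 / 10 ^ 120 := by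
  rw [show 452 = 226 * 2 from rfl, pow_mul]
  norm_num

theorem div_add_le_of_int_le {u : ℤ} {d : ℕ} {t : ℝ} (ht : t ≤ 10 ^ 85 / 10 ^ 120)
    (h : u + 10 ^ 85 ≤ d * 10 ^ 87) : (u : ℝ) / (10 ^ 120 : ℕ) + t ≤ (d : ℝ) / 10 ^ 33 := by
  have h' : (u : ℝ) + 10 ^ 85 ≤ d * 10 ^ 87 := by exact_mod_cast h
  rw [Nat.cast_pow, Nat.cast_ofNat]
  calc (u : ℝ) / 10 ^ 120 + t ≤ (u + 10 ^ 85) / 10 ^ 120 := by rw [add_div]; linarith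
    _ ≤ (d : ℝ) * 10 ^ 87 / 10 ^ 120 := by gcongr
    _ = (d : ℝ) / 10 ^ 33 := by ring

theorem strictMono_cube_add : StrictMono fun x : ℝ => x ^ 3 + x :=
  (Odd.strictMono_pow (by decide)).add strictMono_id

section Root

variable {α : ℝ} (hα : α ^ 3 + α - 1 = 0)
include hα

theorem lt_root_iff {q : ℝ} : q < α ↔ q ^ 3 + q < 1 :=
  strictMono_cube_add.lt_iff_lt.symm.trans (by simp only [show α ^ 3 + α = 1 by linarith])

theorem root_lt_iff {q : ℝ} : α < q ↔ 1 < q ^ 3 + q :=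
  strictMono_cube_add.lt_iff_lt.symm.trans (by simp only [show α ^ 3 + α = 1 by linarith])

theorem root_mem_Ioo : α ∈ Set.Ioo (0.682 : ℝ) 0.683 :=
  ⟨(lt_root_iff hα).2 (by norm_num), (root_lt_iff hα).2 (by norm_num)⟩

theorem aLo_div_lt_root : ((aLo : ℤ) : ℝ) / (10 ^ 120 : ℕ) < α :=
  (lt_root_iff hα).2 (by norm_num [aLo])

theorem root_lt_aLo_add_one_div : α < ((aLo + 1 : ℤ) : ℝ) / (10 ^ 120 : ℕ) :=
  (root_lt_iff hα).2 (by norm_num [aLo])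

/-- As `X³ - X² - 1 = (X - α⁻¹) (X² + α² X + α)`, this says that `err α` has no component along
the dominant root `α⁻¹` of its recurrence. -/
theorem err_add_two (n : ℕ) : err α (n + 2) + α ^ 2 * err α (n + 1) + α * err α n = 0 := by
  induction n with
  | zero =>
    norm_num [err, A]
    linear_combination -2 * hα
  | succ n ih =>
    rw [err_add_three]
    linear_combination (1 + α ^ 2) * ih - (α * err α (n + 1) + err α n) * hα

theorem err_quadratic_form (n : ℕ) :
    err α (n + 1) ^ 2 + α ^ 2 * err α (n + 1) * err α n + α * err α n ^ 2 =
      α ^ n * (err α 1 ^ 2 + α ^ 2 * err α 1 * err α 0 + α * err α 0 ^ 2) := by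
  induction n with
  | zero => ring
  | succ n ih =>
    have h2 : err α (n + 2) = -α ^ 2 * err α (n + 1) - α * err α n := by
      linear_combination err_add_two hα n
    rw [h2, pow_succ]
    linear_combination α * ih

theorem sq_err_le (n : ℕ) : err α n ^ 2 ≤ α ^ n := by
  obtain ⟨hlo, hhi⟩ := root_mem_Ioo hα
  rcases n with _ | n
  · rw [err_zero, pow_zero]
    nlinarith
  have hQ0 : err α 1 ^ 2 + α ^ 2 * err α 1 * err α 0 + α * err α 0 ^ 2 ≤
      α * (1 - α ^ 3 / 4) := by
    rw [err_zero, err_one]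
    nlinarith
  -- `x² + α² x y + α y² = (1 - α³ / 4) x² + α (y + α x / 2)²`
  have hsplit : (1 - α ^ 3 / 4) * err α (n + 1) ^ 2 ≤
      err α (n + 1) ^ 2 + α ^ 2 * err α (n + 1) * err α n + α * err α n ^ 2 := by
    nlinarith [mul_nonneg (by linarith : (0 : ℝ) ≤ α)
      (sq_nonneg (err α n + α / 2 * err α (n + 1)))]
  have hpos : 0 < 1 - α ^ 3 / 4 := by nlinarith
  have hαn : 0 ≤ α ^ n := pow_nonneg (by linarith) n
  have : (1 - α ^ 3 / 4) * err α (n + 1) ^ 2 ≤ (1 - α ^ 3 / 4) * α ^ (n + 1) := by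
    calc _ ≤ α ^ n * (α * (1 - α ^ 3 / 4)) := hsplit.trans (err_quadratic_form hα n ▸ by gcongr)
      _ = _ := by ring
  exact le_of_mul_le_mul_left this hpos

theorem abs_err_le (n : ℕ) : |err α n| ≤ (83 / 100) ^ n := by
  obtain ⟨hlo, hhi⟩ := root_mem_Ioo hα
  refine abs_le_of_sq_le_sq ?_ (by positivity)
  calc err α n ^ 2 ≤ α ^ n := sq_err_le hα n
    _ ≤ ((83 / 100) ^ 2) ^ n := pow_le_pow_left₀ (by linarith) (by linarith) n
    _ = ((83 / 100) ^ n) ^ 2 := by rw [← pow_mul, ← pow_mul, mul_comm]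

theorem err_le_errUpper (i : ℕ) : err α i ≤ errUpper i / (10 ^ 120 : ℕ) :=
  sub_mul_le_div (by positivity) (aLo_div_lt_root hα) le_rfl

theorem neg_err_le_negErrUpper (i : ℕ) : -err α i ≤ negErrUpper i / (10 ^ 120 : ℕ) := by
  have := div_le_sub_mul (c := -negErrUpper i) (b := A (i - 1)) (s := A i) (by positivity)
    (root_lt_aLo_add_one_div hα) (by unfold negErrUpper; push_cast; linarith)
  rw [Int.cast_neg, neg_div] at this
  unfold err
  linarith

theorem F_sub_mul_le (n : ℕ) :
    (F 3 n : ℝ) - α * n ≤ 0.854187179928304211983581540152668 := by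
  obtain ⟨l, hl, -, rfl⟩ := exists_sparse_sum_A (self_lt_A n)
  rw [sub_mul_sum_A_eq_sum_err α hl]
  calc (l.map (err α)).sum
      ≤ dpTable errUpper 452 / (10 ^ 120 : ℕ) + (83 / 100) ^ 452 / (1 - 83 / 100) :=
        sum_le_dpTable (by positivity) (by norm_num) (by norm_num)
          (fun i _ => err_le_errUpper hα i) (fun i _ => (le_abs_self _).trans (abs_err_le hα i)) hl
    _ ≤ 854187179928304211983581540152668 / 10 ^ 33 :=
        div_add_le_of_int_le geometric_tail_le dpTable_errUpper
    _ = 0.854187179928304211983581540152668 := by norm_num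

theorem le_F_sub_mul (n : ℕ) :
    -0.708415898743967960305146324178773 ≤ (F 3 n : ℝ) - α * n := by
  obtain ⟨l, hl, -, rfl⟩ := exists_sparse_sum_A (self_lt_A n)
  rw [sub_mul_sum_A_eq_sum_err α hl, neg_le, List.sum_neg, List.map_map]
  calc (l.map (Neg.neg ∘ err α)).sum
      ≤ dpTable negErrUpper 452 / (10 ^ 120 : ℕ) + (83 / 100) ^ 452 / (1 - 83 / 100) :=
        sum_le_dpTable (by positivity) (by norm_num) (by norm_num)
          (fun i _ => neg_err_le_negErrUpper hα i)
          (fun i _ => (neg_le_abs _).trans (abs_err_le hα i)) hl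
    _ ≤ 708415898743967960305146324178773 / 10 ^ 33 :=
        div_add_le_of_int_le geometric_tail_le dpTable_negErrUpper
    _ = 0.708415898743967960305146324178773 := by norm_num

theorem exists_le_F_sub_mul :
    ∃ n : ℕ, 0.854187179928304211983581540152668 - 3 / 10 ^ 33 ≤ (F 3 n : ℝ) - α * n := by
  refine ⟨(witnessSup.map A).sum, ?_⟩
  rw [F_sum_A sparse_witnessSup]
  calc (0.854187179928304211983581540152668 : ℝ) - 3 / 10 ^ 33
      = (((854187179928304211983581540152668 - 3) * 10 ^ 87 : ℤ) : ℝ) / (10 ^ 120 : ℕ) := by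
        norm_num
    _ ≤ _ := div_le_sub_mul (by positivity) (root_lt_aLo_add_one_div hα) witnessSup_bound

theorem exists_F_sub_mul_le :
    ∃ n : ℕ, (F 3 n : ℝ) - α * n ≤ -0.708415898743967960305146324178773 + 3 / 10 ^ 33 := by
  refine ⟨(witnessInf.map A).sum, ?_⟩
  rw [F_sum_A sparse_witnessInf]
  calc _ ≤ (((-708415898743967960305146324178773 + 3) * 10 ^ 87 : ℤ) : ℝ) / (10 ^ 120 : ℕ) :=
        sub_mul_le_div (by positivity) (aLo_div_lt_root hα) witnessInf_bound
    _ = -0.708415898743967960305146324178773 + 3 / 10 ^ 33 := by norm_num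

end Root

end Hofstadter

theorem ciSup_abs_eq_ciSup {ι : Type*} [Nonempty ι] {g : ι → ℝ} (hg : BddAbove (Set.range g))
    (hneg : ∀ i, -g i ≤ ⨆ j, g j) : ⨆ i, |g i| = ⨆ i, g i := by
  have habs : ∀ i, |g i| ≤ ⨆ j, g j := fun i => abs_le'.2 ⟨le_ciSup hg i, hneg i⟩
  exact le_antisymm (ciSup_le habs)
    (ciSup_mono ⟨_, Set.forall_mem_range.2 habs⟩ fun i => le_abs_self (g i))

theorem discrepancy_three_bounds_general (α : ℝ)
    (hαroot : α ^ 3 + α - 1 = 0) :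
    (0.854187179928304211983581540152668 - 3 / 10 ^ 33 ≤
        ⨆ n : ℕ, ((F 3 n : ℝ) - α * n)) ∧
    ((⨆ n : ℕ, ((F 3 n : ℝ) - α * n)) ≤ 0.854187179928304211983581540152668) ∧
    (-0.708415898743967960305146324178773 ≤ ⨅ n : ℕ, ((F 3 n : ℝ) - α * n)) ∧
    ((⨅ n : ℕ, ((F 3 n : ℝ) - α * n)) ≤
        -0.708415898743967960305146324178773 + 3 / 10 ^ 33) ∧
    (∀ n : ℕ, |(F 3 n : ℝ) - α * n| < 1) ∧
    ((⨆ n : ℕ, |(F 3 n : ℝ) - α * n|) = ⨆ n : ℕ, ((F 3 n : ℝ) - α * n)) := by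
  have hle := Hofstadter.F_sub_mul_le hαroot
  have hge := Hofstadter.le_F_sub_mul hαroot
  have hbdd : BddAbove (Set.range fun n : ℕ => (F 3 n : ℝ) - α * n) :=
    ⟨_, Set.forall_mem_range.2 hle⟩
  obtain ⟨nSup, hnSup⟩ := Hofstadter.exists_le_F_sub_mul hαroot
  obtain ⟨nInf, hnInf⟩ := Hofstadter.exists_F_sub_mul_le hαroot
  have hsup : 0.854187179928304211983581540152668 - 3 / 10 ^ 33 ≤
      ⨆ n : ℕ, ((F 3 n : ℝ) - α * n) := hnSup.trans (le_ciSup hbdd nSup)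
  refine ⟨hsup, ciSup_le hle, le_ciInf hge,
    (ciInf_le ⟨_, Set.forall_mem_range.2 hge⟩ nInf).trans hnInf,
    fun n => abs_lt.2 ⟨by linarith [hge n], by linarith [hle n]⟩,
    ciSup_abs_eq_ciSup hbdd fun n => by linarith [hge n]⟩

/-- Sharp bounds for `δ_3 n = F_3 n - α_3 n` : its supremum lies in
`[d₃⁺ - 3·10⁻³³, d₃⁺]` and its infimum in `[d₃⁻, d₃⁻ + 3·10⁻³³]`.
In particular `|δ_3 n| < 1` for all `n`, so the discrepancy
`Δ_3 = sup |δ_3|` is finite and equals `sup δ_3`. -/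
theorem discrepancy_three_bounds (α : ℝ)
    (hα : α ∈ Set.Ioo (0 : ℝ) 1) (hαroot : α ^ 3 + α - 1 = 0) :
    (0.854187179928304211983581540152668 - 3 / 10 ^ 33 ≤
        ⨆ n : ℕ, ((F 3 n : ℝ) - α * n)) ∧
    ((⨆ n : ℕ, ((F 3 n : ℝ) - α * n)) ≤ 0.854187179928304211983581540152668) ∧
    (-0.708415898743967960305146324178773 ≤ ⨅ n : ℕ, ((F 3 n : ℝ) - α * n)) ∧
    ((⨅ n : ℕ, ((F 3 n : ℝ) - α * n)) ≤
        -0.708415898743967960305146324178773 + 3 / 10 ^ 33) ∧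
    (∀ n : ℕ, |(F 3 n : ℝ) - α * n| < 1) ∧
    ((⨆ n : ℕ, |(F 3 n : ℝ) - α * n|) = ⨆ n : ℕ, ((F 3 n : ℝ) - α * n)) :=
  discrepancy_three_bounds_general α hαroot
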